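/- (CCAH strong truthfulness.) Fix m ≥ 3, n ≥ 1, joint distributions P_b and P_{t',t''} (nonnegative entries summing to 1), and the CCAH delta matrices Δ_b(i,j) = P_b(i,j) − (1/((m−1)(m−2))) Σ_{t' ≠ t'', t' ≠ b, t'' ≠ b} P_{t',t''}(i,j), with S_b(i,j) = 1 if Δ_b(i,j) > 0 and 0 otherwise, and E(F,G) = (1/m) Σ_b Σ_{i,j} Δ_b(i,j) · S_b(F(i),G(j)). If Condition 1 holds (Δ_b(i,i) > 0 for all b, i, and Σ_b Δ_b(i,j) < 0 for all i ≠ j), then E(F,G) ≤ E(𝕀,𝕀) for all deterministic F, G, with equality only if F = G and F is a bijection. -/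

import Mathlib

/-!
Each summand satisfies `Δ * 𝟙[0 < Δ'] ≤ Δ * 𝟙[0 < Δ]`, so truthful reporting maximises the payment
term by term. At equality every term is tight: on the pairs `(i, i)` this gives
`0 < Δ b (F i) (G i)` for all `b`, which Condition 1 rules out unless `F i = G i`; and if
`F i = F i'`, tightness at `(i, i')` gives `0 ≤ Δ b i i'` for all `b`, forcing `i = i'`.
-/

open Finset

theorem mul_ite_pos_le {α : Type*} [Ring α] [LinearOrder α] [IsOrderedRing α] (a b : α) :
    a * (if 0 < b then 1 else 0) ≤ a * (if 0 < a then 1 else 0) := by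
  split_ifs with hb ha ha
  · rfl
  · simpa using not_lt.mp ha
  · simpa using ha.le
  · rfl

theorem mul_ite_pos_eq_iff {α : Type*} [Ring α] [LinearOrder α] (a b : α) :
    a * (if 0 < b then 1 else 0) = a * (if 0 < a then 1 else 0) ↔
      (0 < a → 0 < b) ∧ (0 < b → 0 ≤ a) := by
  rcases lt_trichotomy a 0 with ha | rfl | ha
  · by_cases hb : 0 < b <;> simp [ha.ne, hb, ha.not_gt, ha.not_ge]
  · simp
  · by_cases hb : 0 < b <;> simp [ha, hb, ha.ne, ha.le]

namespace CCAH

variable {ι κ : Type*} [Fintype ι] [Fintype κ] (Δ : ι → κ → κ → ℝ)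

/-- `m` times the CCAH expected payment `E F G`, with the sign matrix `S` unfolded. -/
noncomputable def payoff (F G : κ → κ) : ℝ :=
  ∑ b, ∑ i, ∑ j, Δ b i j * if 0 < Δ b (F i) (G j) then 1 else 0

theorem payoff_le_payoff_id (F G : κ → κ) : payoff Δ F G ≤ payoff Δ id id :=
  sum_le_sum fun _ _ => sum_le_sum fun _ _ => sum_le_sum fun _ _ => mul_ite_pos_le _ _

variable {Δ}

theorem mul_ite_pos_eq_of_payoff_eq {F G : κ → κ} (h : payoff Δ F G = payoff Δ id id)
    (b : ι) (i j : κ) :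
    Δ b i j * (if 0 < Δ b (F i) (G j) then 1 else 0) =
      Δ b i j * (if 0 < Δ b i j then 1 else 0) := by
  have hb := (sum_eq_sum_iff_of_le fun _ _ => sum_le_sum fun _ _ => sum_le_sum fun _ _ =>
    mul_ite_pos_le _ _).mp h b (mem_univ _)
  have hi := (sum_eq_sum_iff_of_le fun _ _ => sum_le_sum fun _ _ =>
    mul_ite_pos_le _ _).mp hb i (mem_univ _)
  exact (sum_eq_sum_iff_of_le fun _ _ => mul_ite_pos_le _ _).mp hi j (mem_univ _)

theorem eq_and_bijective_of_payoff_eq (hdiag : ∀ b i, 0 < Δ b i i)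
    (hoff : ∀ i j, i ≠ j → ∑ b, Δ b i j < 0) {F G : κ → κ}
    (h : payoff Δ F G = payoff Δ id id) : F = G ∧ Function.Bijective F := by
  have eq_of_nonneg : ∀ i j, (∀ b, 0 ≤ Δ b i j) → i = j := fun i j hij => by
    by_contra hne
    exact (hoff i j hne).not_ge (sum_nonneg fun b _ => hij b)
  have tight : ∀ b i j,
      (0 < Δ b i j → 0 < Δ b (F i) (G j)) ∧ (0 < Δ b (F i) (G j) → 0 ≤ Δ b i j) :=
    fun b i j => (mul_ite_pos_eq_iff _ _).mp (mul_ite_pos_eq_of_payoff_eq h b i j)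
  have hFG : F = G := funext fun i =>
    eq_of_nonneg _ _ fun b => ((tight b i i).1 (hdiag b i)).le
  subst hFG
  refine ⟨rfl, Finite.injective_iff_bijective.mp fun i i' hii' => ?_⟩
  refine eq_of_nonneg _ _ fun b => (tight b i i').2 ?_
  simpa [hii'] using hdiag b (F i')

end CCAH

theorem ccah_strong_truthful_general (m n : ℕ) (hm : 3 ≤ m)
    (Δ : Fin m → Fin n → Fin n → ℝ)
    (S : Fin m → Fin n → Fin n → ℝ)
    (hS : ∀ b i j, S b i j = if 0 < Δ b i j then 1 else 0)
    (E : (Fin n → Fin n) → (Fin n → Fin n) → ℝ)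
    (hE : ∀ F G, E F G =
      (1 / (m : ℝ)) * ∑ b, ∑ i, ∑ j, Δ b i j * S b (F i) (G j))
    (hdiag : ∀ b i, 0 < Δ b i i)
    (hoff : ∀ i j, i ≠ j → ∑ b, Δ b i j < 0) :
    ∀ F G : Fin n → Fin n,
      E F G ≤ E id id ∧ (E F G = E id id → F = G ∧ Function.Bijective F) := by
  have hE' : ∀ F G, E F G = 1 / m * CCAH.payoff Δ F G := by
    intro F G
    simp only [hE, hS, CCAH.payoff]
  have hm' : (0 : ℝ) < 1 / m := by
    have : (0 : ℝ) < m := by exact_mod_cast (by omega : 0 < m)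
    positivity
  intro F G
  rw [hE', hE']
  exact ⟨mul_le_mul_of_nonneg_left (CCAH.payoff_le_payoff_id Δ F G) hm'.le,
    fun h => CCAH.eq_and_bijective_of_payoff_eq hdiag hoff (mul_left_cancel₀ hm'.ne' h)⟩

/-- Strong truthfulness of the CCAH mechanism under Condition 1. -/
theorem ccah_strong_truthful (m n : ℕ) (hm : 3 ≤ m) (hn : 1 ≤ n)
    (P : Fin m → Fin n → Fin n → ℝ)
    (hPnonneg : ∀ k i j, 0 ≤ P k i j)
    (hPsum : ∀ k, ∑ i, ∑ j, P k i j = 1)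
    (Ppair : Fin m → Fin m → Fin n → Fin n → ℝ)
    (hPpairnonneg : ∀ t' t'', t' ≠ t'' → ∀ i j, 0 ≤ Ppair t' t'' i j)
    (hPpairsum : ∀ t' t'', t' ≠ t'' → ∑ i, ∑ j, Ppair t' t'' i j = 1)
    (Δ : Fin m → Fin n → Fin n → ℝ)
    (hΔ : ∀ b i j, Δ b i j = P b i j -
      (1 / (((m : ℝ) - 1) * ((m : ℝ) - 2))) *
        ∑ t' : Fin m, ∑ t'' : Fin m,
          if t' ≠ t'' ∧ t' ≠ b ∧ t'' ≠ b then Ppair t' t'' i j else 0)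
    (S : Fin m → Fin n → Fin n → ℝ)
    (hS : ∀ b i j, S b i j = if 0 < Δ b i j then 1 else 0)
    (E : (Fin n → Fin n) → (Fin n → Fin n) → ℝ)
    (hE : ∀ F G, E F G =
      (1 / (m : ℝ)) * ∑ b, ∑ i, ∑ j, Δ b i j * S b (F i) (G j))
    (hdiag : ∀ b i, 0 < Δ b i i)
    (hoff : ∀ i j, i ≠ j → ∑ b, Δ b i j < 0) :
    ∀ F G : Fin n → Fin n,
      E F G ≤ E id id ∧ (E F G = E id id → F = G ∧ Function.Bijective F) :=
  ccah_strong_truthful_general m n hm Δ S hS E hE hdiag hoff
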